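/- Value of the Tsallis-entropy-regularized minimum: under the hypotheses of the ent-max lemma (0 ≤ q < 1, λ > 0, Q : ℝ^m → ℝ measurable, C ∈ ℝ with φ*(u) := exp_q(-(1/λ)Q(u) + C) a probability density and ∫|Q|φ* < ∞), the minimum value of J(φ) := ∫ Q φ du - λ H_q(φ) over probability densities equals ((1-q)/(2-q)) ∫ Q(u) φ*(u) du + (λ/(2-q))(C - 1). -/

import Mathlib

open Real MeasureTheory

/-- The `q`-exponential: `exp_q(x) = [1 + (1-q)x]_+ ^ (1/(1-q))`. -/
noncomputable def qexp (q x : ℝ) : ℝ := (max (1 + (1 - q) * x) 0) ^ (1 / (1 - q))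

/-- The `q`-logarithm: `log_q(x) = (x^(1-q) - 1)/(1-q)` (for `x > 0`). -/
noncomputable def qlog (q x : ℝ) : ℝ := (x ^ (1 - q) - 1) / (1 - q)

/-- The deformed `q`-entropy of a density `φ` on `ℝᵐ`:
`H_q(φ) = -(1/(2-q))(∫ φ log_q φ - 1)`. -/
noncomputable def deformedEntropy {m : ℕ} (q : ℝ) (φ : (Fin m → ℝ) → ℝ) : ℝ :=
  -(1 / (2 - q)) * ((∫ u : Fin m → ℝ, φ u * qlog q (φ u)) - 1)

/-- The Tsallis-entropy-regularized objective `J(φ) = ∫ Q φ - λ H_q(φ)`. -/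
noncomputable def Jreg {m : ℕ} (q lam : ℝ) (Q φ : (Fin m → ℝ) → ℝ) : ℝ :=
  (∫ u : Fin m → ℝ, Q u * φ u) - lam * deformedEntropy q φ

/-!
On `[0, ∞)` the function `x ↦ x log_q x = (x^(2-q) - x)/(1-q)` is convex, and its tangent at
`φ* = exp_q t`, `t = -Q/λ + C`, has slope `1 + (2-q) t` (a subgradient where `φ* = 0`).
Integrating this tangent inequality against a competitor `φ` of the same mass shows that `φ*`
minimizes `∫ φ log_q φ - (2-q) ∫ t φ`, and on unit-mass densities `J` is a positive multiple of
this functional plus a constant. The value comes from `φ* log_q φ* = t φ*`.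
-/

lemma rpow_tangent_le {x y p : ℝ} (hx : 0 ≤ x) (hy : 0 < y) (hp : 1 ≤ p) :
    y ^ p + p * y ^ (p - 1) * (x - y) ≤ x ^ p := by
  have hbernoulli := one_add_mul_self_le_rpow_one_add
    (by linarith [div_nonneg hx hy.le] : -1 ≤ x / y - 1) hp
  rw [add_sub_cancel, div_rpow hx hy.le, le_div_iff₀ (rpow_pos_of_pos hy p)] at hbernoulli
  have hsub : y ^ (p - 1) = y ^ p / y := by rw [rpow_sub hy, rpow_one]
  calc y ^ p + p * y ^ (p - 1) * (x - y) = (1 + p * (x / y - 1)) * y ^ p := by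
        rw [hsub]; field_simp
    _ ≤ x ^ p := hbernoulli

section QDeformed

variable {q : ℝ}

lemma qexp_nonneg (q x : ℝ) : 0 ≤ qexp q x := rpow_nonneg (le_max_right _ _) _

lemma continuous_qexp (hq : q < 1) : Continuous (qexp q) :=
  ((continuous_const.add (continuous_const.mul continuous_id)).max continuous_const).rpow_const
    fun _ => Or.inr (by have := sub_pos.2 hq; positivity)

lemma qexp_eq_zero (hq : q < 1) {x : ℝ} (hx : 1 + (1 - q) * x ≤ 0) : qexp q x = 0 := by
  rw [qexp, max_eq_right hx, zero_rpow (by have := sub_pos.2 hq; positivity)]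

lemma qexp_rpow_one_sub (hq : q < 1) {x : ℝ} (hx : 0 < 1 + (1 - q) * x) :
    qexp q x ^ (1 - q) = 1 + (1 - q) * x := by
  rw [qexp, max_eq_left hx.le, ← rpow_mul hx.le, one_div_mul_cancel (sub_pos.2 hq).ne', rpow_one]

lemma qlog_qexp (hq : q < 1) {x : ℝ} (hx : 0 < 1 + (1 - q) * x) : qlog q (qexp q x) = x := by
  rw [qlog, qexp_rpow_one_sub hq hx]
  field_simp [(sub_pos.2 hq).ne']
  ring

lemma qexp_mul_qlog_qexp (hq : q < 1) (x : ℝ) : qexp q x * qlog q (qexp q x) = qexp q x * x := by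
  rcases le_or_gt (1 + (1 - q) * x) 0 with hx | hx
  · simp [qexp_eq_zero hq hx]
  · rw [qlog_qexp hq hx]

lemma mul_qlog (hq : q < 1) {x : ℝ} (hx : 0 ≤ x) : x * qlog q x = (x ^ (2 - q) - x) / (1 - q) := by
  rw [qlog, show 2 - q = 1 + (1 - q) by ring, rpow_add' hx (by linarith), rpow_one, mul_div_assoc',
    mul_sub, mul_one]

lemma qexp_mul_qlog_add_le (hq : q < 1) (t : ℝ) {x : ℝ} (hx : 0 ≤ x) :
    qexp q t * qlog q (qexp q t) + (1 + (2 - q) * t) * (x - qexp q t) ≤ x * qlog q x := by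
  have h1q : 0 < 1 - q := sub_pos.2 hq
  rw [qexp_mul_qlog_qexp hq, mul_qlog hq hx, le_div_iff₀ h1q]
  have hxp : 0 ≤ x ^ (2 - q) := rpow_nonneg hx _
  rcases le_or_gt (1 + (1 - q) * t) 0 with hs | hs
  · rw [qexp_eq_zero hq hs]
    have : (1 + (1 - q) * t) * x * (2 - q) ≤ 0 :=
      mul_nonpos_of_nonpos_of_nonneg (mul_nonpos_of_nonpos_of_nonneg hs hx) (by linarith)
    nlinarith
  · set y := qexp q t
    have hy : 0 < y := by
      simp only [y, qexp, max_eq_left hs.le]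
      exact rpow_pos_of_pos hs _
    have hys := qexp_rpow_one_sub hq hs
    have htangent := rpow_tangent_le hx hy (by linarith : 1 ≤ 2 - q)
    have hy2 : y ^ (2 - q) = (1 + (1 - q) * t) * y := by
      rw [show 2 - q = (1 - q) + 1 by ring, rpow_add hy, rpow_one, hys]
    rw [show 2 - q - 1 = 1 - q by ring, hys, hy2] at htangent
    nlinarith

end QDeformed

section Integral

variable {α : Type*} [MeasurableSpace α] {μ : Measure α}

lemma integrable_mul_of_integrable_abs_mul {f g : α → ℝ} (hf : AEStronglyMeasurable f μ)
    (hg : AEStronglyMeasurable g μ) (hg0 : ∀ x, 0 ≤ g x)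
    (h : Integrable (fun x => |f x| * g x) μ) : Integrable (fun x => f x * g x) μ :=
  h.mono' (hf.mul hg) (ae_of_all _ fun x => by rw [norm_mul, norm_eq_abs, norm_of_nonneg (hg0 x)])

lemma integrable_affine_mul {f φ : α → ℝ} (a b : ℝ) (hfφ : Integrable (fun x => f x * φ x) μ)
    (hφ : Integrable φ μ) : Integrable (fun x => (a * f x + b) * φ x) μ := by
  refine ((hfφ.const_mul a).add (hφ.const_mul b)).congr (ae_of_all _ fun x => ?_)
  simp only [Pi.add_apply]
  ring

lemma integral_affine_mul {f φ : α → ℝ} (a b : ℝ) (hfφ : Integrable (fun x => f x * φ x) μ)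
    (hφ : Integrable φ μ) :
    ∫ x, (a * f x + b) * φ x ∂μ = a * ∫ x, f x * φ x ∂μ + b * ∫ x, φ x ∂μ := by
  simp only [add_mul, mul_assoc]
  rw [integral_add (hfφ.const_mul a) (hφ.const_mul b), integral_const_mul, integral_const_mul]

theorem integral_qexp_mul_qlog_sub_le {q : ℝ} (hq : q < 1) {t φ : α → ℝ} (hφ0 : ∀ x, 0 ≤ φ x)
    (hmass : ∫ x, φ x ∂μ = ∫ x, qexp q (t x) ∂μ) (hφ : Integrable φ μ)
    (hψ : Integrable (fun x => qexp q (t x)) μ) (htφ : Integrable (fun x => t x * φ x) μ)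
    (htψ : Integrable (fun x => t x * qexp q (t x)) μ)
    (hφlog : Integrable (fun x => φ x * qlog q (φ x)) μ) :
    ∫ x, qexp q (t x) * qlog q (qexp q (t x)) ∂μ - (2 - q) * ∫ x, t x * qexp q (t x) ∂μ ≤
      ∫ x, φ x * qlog q (φ x) ∂μ - (2 - q) * ∫ x, t x * φ x ∂μ := by
  have hψlog : Integrable (fun x => qexp q (t x) * qlog q (qexp q (t x))) μ := by
    simpa only [qexp_mul_qlog_qexp hq, mul_comm] using htψ
  have hpt : ∀ x, qexp q (t x) * qlog q (qexp q (t x)) +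
      ((φ x - qexp q (t x)) + (2 - q) * (t x * φ x - t x * qexp q (t x))) ≤
        φ x * qlog q (φ x) := fun x => by
    linarith [qexp_mul_qlog_add_le hq (t x) (hφ0 x)]
  have hmass_diff : Integrable (fun x => φ x - qexp q (t x)) μ := hφ.sub hψ
  have hpot_diff : Integrable (fun x => (2 - q) * (t x * φ x - t x * qexp q (t x))) μ :=
    (htφ.sub htψ).const_mul _
  have hslope : Integrable (fun x => (φ x - qexp q (t x)) +
      (2 - q) * (t x * φ x - t x * qexp q (t x))) μ := hmass_diff.add hpot_diff
  have hmono := integral_mono (hψlog.add hslope) hφlog hpt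
  simp only [Pi.add_apply] at hmono
  rw [integral_add hψlog hslope, integral_add hmass_diff hpot_diff, integral_sub hφ hψ,
    integral_const_mul, integral_sub htφ htψ, hmass] at hmono
  linarith

end Integral

lemma Jreg_eq_of_integral_eq_one {m : ℕ} {q lam : ℝ} (hq : q ≠ 2) (hlam : lam ≠ 0) (C : ℝ)
    {Q φ : (Fin m → ℝ) → ℝ} (hQφ : Integrable fun u => Q u * φ u) (hφ : Integrable φ)
    (hφ1 : ∫ u, φ u = 1) :
    Jreg q lam Q φ = lam / (2 - q) * ((∫ u, φ u * qlog q (φ u)) -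
      (2 - q) * ∫ u, (-(1 / lam) * Q u + C) * φ u) + lam * C - lam / (2 - q) := by
  have h2q : 2 - q ≠ 0 := sub_ne_zero.2 (Ne.symm hq)
  rw [Jreg, deformedEntropy, integral_affine_mul _ _ hQφ hφ, hφ1]
  field_simp
  ring

theorem entmax_min_value_general {m : ℕ} (q lam : ℝ) (hq1 : q < 1)
    (hlam : 0 < lam) (Q : (Fin m → ℝ) → ℝ) (hQ : Measurable Q) (C : ℝ)
    (hnorm : (∫ u : Fin m → ℝ, qexp q (-(1 / lam) * Q u + C)) = 1)
    (hint : Integrable fun u : Fin m → ℝ => |Q u| * qexp q (-(1 / lam) * Q u + C)) :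
    IsLeast
      {v : ℝ | ∃ φ : (Fin m → ℝ) → ℝ, Measurable φ ∧ (∀ u, 0 ≤ φ u) ∧
        (∫ u : Fin m → ℝ, φ u) = 1 ∧
        (Integrable fun u => |Q u| * φ u) ∧
        (Integrable fun u => φ u * qlog q (φ u)) ∧
        v = Jreg q lam Q φ}
      (((1 - q) / (2 - q)) * (∫ u : Fin m → ℝ, Q u * qexp q (-(1 / lam) * Q u + C)) +
        (lam / (2 - q)) * (C - 1)) := by
  set t : (Fin m → ℝ) → ℝ := fun u => -(1 / lam) * Q u + C
  set ψ : (Fin m → ℝ) → ℝ := fun u => qexp q (t u)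
  have hψ : Integrable ψ := Integrable.of_integral_ne_zero (by rw [hnorm]; exact one_ne_zero)
  have hψm : Measurable ψ := (continuous_qexp hq1).measurable.comp ((hQ.const_mul _).add_const C)
  have hQψ : Integrable fun u => Q u * ψ u :=
    integrable_mul_of_integrable_abs_mul hQ.aestronglyMeasurable hψm.aestronglyMeasurable
      (fun _ => qexp_nonneg _ _) hint
  have htψ : Integrable fun u => t u * ψ u := integrable_affine_mul _ _ hQψ hψ
  have hψlog : ∀ u, ψ u * qlog q (ψ u) = t u * ψ u := fun u => by
    rw [qexp_mul_qlog_qexp hq1, mul_comm]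
  have hJψ :
      Jreg q lam Q ψ = ((1 - q) / (2 - q)) * (∫ u, Q u * ψ u) + (lam / (2 - q)) * (C - 1) := by
    rw [Jreg_eq_of_integral_eq_one (by linarith) hlam.ne' C hQψ hψ hnorm]
    simp only [hψlog, t, integral_affine_mul _ _ hQψ hψ, hnorm]
    field_simp [(by linarith : 2 - q ≠ 0)]
    ring
  refine ⟨⟨ψ, hψm, fun _ => qexp_nonneg _ _, hnorm, hint, by simpa only [hψlog] using htψ,
    hJψ.symm⟩, ?_⟩
  rintro _ ⟨φ, hφm, hφ0, hφ1, hQφ_abs, hφlog, rfl⟩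
  have hφ : Integrable φ := Integrable.of_integral_ne_zero (by rw [hφ1]; exact one_ne_zero)
  have hQφ : Integrable fun u => Q u * φ u :=
    integrable_mul_of_integrable_abs_mul hQ.aestronglyMeasurable hφm.aestronglyMeasurable hφ0
      hQφ_abs
  rw [← hJψ, Jreg_eq_of_integral_eq_one (by linarith) hlam.ne' C hQψ hψ hnorm,
    Jreg_eq_of_integral_eq_one (by linarith) hlam.ne' C hQφ hφ hφ1]
  gcongr _ * ?_ + _ - _
  · exact div_nonneg hlam.le (by linarith)
  · exact integral_qexp_mul_qlog_sub_le hq1 hφ0 (hφ1.trans hnorm.symm) hφ hψ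
      (integrable_affine_mul _ _ hQφ hφ) htψ hφlog

/-- The minimum of `J(φ) = ∫ Q φ - λ H_q(φ)` over probability densities equals
`((1-q)/(2-q)) ∫ Q φ* + (λ/(2-q))(C - 1)` where `φ*(u) = exp_q(-(1/λ)Q(u) + C)`. -/
theorem entmax_min_value {m : ℕ} (q lam : ℝ) (hq0 : 0 ≤ q) (hq1 : q < 1)
    (hlam : 0 < lam) (Q : (Fin m → ℝ) → ℝ) (hQ : Measurable Q) (C : ℝ)
    (hnorm : (∫ u : Fin m → ℝ, qexp q (-(1 / lam) * Q u + C)) = 1)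
    (hint : Integrable fun u : Fin m → ℝ => |Q u| * qexp q (-(1 / lam) * Q u + C)) :
    IsLeast
      {v : ℝ | ∃ φ : (Fin m → ℝ) → ℝ, Measurable φ ∧ (∀ u, 0 ≤ φ u) ∧
        (∫ u : Fin m → ℝ, φ u) = 1 ∧
        (Integrable fun u => |Q u| * φ u) ∧
        (Integrable fun u => φ u * qlog q (φ u)) ∧
        v = Jreg q lam Q φ}
      (((1 - q) / (2 - q)) * (∫ u : Fin m → ℝ, Q u * qexp q (-(1 / lam) * Q u + C)) +
        (lam / (2 - q)) * (C - 1)) :=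
  entmax_min_value_general q lam hq1 hlam Q hQ C hnorm hint
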